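/- arXiv:2604.11347 — 4 statements merged into one kernel-verified Lean document; each statement's English description precedes it below -/
import Mathlib

section
/- If γ : [0, ℓ] → [0,1]^n is a d-path whose arc-length function L_γ(t) = d₁(γ(0), γ(t)) is surjective onto [0, L_γ(ℓ)] and γ is constant on every interval on which L_γ is constant, then there is a well-defined continuous natural path N(γ) : [0, L_γ(ℓ)] → [0,1]^n with N(γ) ∘ L_γ = γ and L_{N(γ)}(t) = t for all t; i.e. every d-path factors as its naturalization precomposed with a nondecreasing surjection. -/
open Set

/-- Naturalization: if `γ : [0, ℓ] → [0,1]^n` is a d-path whose arc-length function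
`L_γ` is surjective onto `[0, L_γ(ℓ)]` and `γ` is constant wherever `L_γ` is, then there
is a continuous natural path `N(γ) : [0, L_γ(ℓ)] → [0,1]^n` with `N(γ) ∘ L_γ = γ` and
`L_{N(γ)}(t) = t` for all `t`. -/
theorem naturalization_exists (n : ℕ) (hn : 1 ≤ n) (ℓ : ℝ) (hℓ : 0 < ℓ)
    (γ : ℝ → Fin n → ℝ)
    (hcont : ContinuousOn γ (Icc 0 ℓ))
    (hmono : ∀ i, MonotoneOn (fun t => γ t i) (Icc 0 ℓ))
    (hcube : ∀ t ∈ Icc (0:ℝ) ℓ, ∀ i, γ t i ∈ Icc (0:ℝ) 1)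
    (L : ℝ → ℝ) (hL : ∀ t, L t = ∑ i, |γ t i - γ 0 i|)
    (hsurj : SurjOn L (Icc 0 ℓ) (Icc 0 (L ℓ)))
    (hconst : ∀ s ∈ Icc (0:ℝ) ℓ, ∀ t ∈ Icc (0:ℝ) ℓ, L s = L t → γ s = γ t) :
    ∃ δ : ℝ → Fin n → ℝ,
      ContinuousOn δ (Icc 0 (L ℓ)) ∧
      (∀ t ∈ Icc (0:ℝ) ℓ, δ (L t) = γ t) ∧
      (∀ t ∈ Icc (0:ℝ) (L ℓ), ∀ i, δ t i ∈ Icc (0:ℝ) 1) ∧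
      (∀ i, MonotoneOn (fun t => δ t i) (Icc 0 (L ℓ))) ∧
      ∀ t ∈ Icc (0:ℝ) (L ℓ), ∑ i, |δ t i - δ 0 i| = t := by
  classical
  have h0mem : (0:ℝ) ∈ Icc (0:ℝ) ℓ := ⟨le_refl 0, hℓ.le⟩
  have hℓmem : ℓ ∈ Icc (0:ℝ) ℓ := ⟨hℓ.le, le_refl ℓ⟩
  have hLdiff : ∀ s ∈ Icc (0:ℝ) ℓ, ∀ t ∈ Icc (0:ℝ) ℓ, s ≤ t →
      L t - L s = ∑ i, (γ t i - γ s i) := by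
    intro s hs t ht hst
    have h1 : ∀ i, γ 0 i ≤ γ s i := fun i => hmono i h0mem hs hs.1
    have h2 : ∀ i, γ 0 i ≤ γ t i := fun i => hmono i h0mem ht ht.1
    rw [hL, hL, ← Finset.sum_sub_distrib]
    refine Finset.sum_congr rfl fun i _ => ?_
    rw [abs_of_nonneg (by linarith [h2 i]), abs_of_nonneg (by linarith [h1 i])]
    ring
  have hLmono : MonotoneOn L (Icc 0 ℓ) := by
    intro s hs t ht hst
    have h := hLdiff s hs t ht hst
    have hnn : (0:ℝ) ≤ ∑ i, (γ t i - γ s i) :=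
      Finset.sum_nonneg fun i _ => sub_nonneg.2 (hmono i hs ht hst)
    linarith
  have hL0 : L 0 = 0 := by simp [hL]
  set p : ℝ → ℝ := fun s => if h : s ∈ Icc (0:ℝ) (L ℓ) then (hsurj h).choose else 0
    with hpdef
  have hp : ∀ s, s ∈ Icc (0:ℝ) (L ℓ) → p s ∈ Icc (0:ℝ) ℓ ∧ L (p s) = s := by
    intro s hs
    have h := (hsurj hs).choose_spec
    simp only [hpdef, dif_pos hs]
    exact h
  have key : ∀ s, s ∈ Icc (0:ℝ) (L ℓ) → ∀ t, t ∈ Icc (0:ℝ) (L ℓ) → s ≤ t →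
      (∀ i, γ (p s) i ≤ γ (p t) i) ∧ ∑ i, |γ (p t) i - γ (p s) i| = t - s := by
    intro s hs t ht hst
    obtain ⟨hps, hLps⟩ := hp s hs
    obtain ⟨hpt, hLpt⟩ := hp t ht
    rcases le_total (p s) (p t) with h | h
    · have hmle : ∀ i, γ (p s) i ≤ γ (p t) i := fun i => hmono i hps hpt h
      refine ⟨hmle, ?_⟩
      have hd := hLdiff (p s) hps (p t) hpt h
      rw [hLps, hLpt] at hd
      calc ∑ i, |γ (p t) i - γ (p s) i| = ∑ i, (γ (p t) i - γ (p s) i) :=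
            Finset.sum_congr rfl fun i _ => abs_of_nonneg (by linarith [hmle i])
        _ = t - s := hd.symm
    · have hLle : L (p t) ≤ L (p s) := hLmono hpt hps h
      have hts : t ≤ s := by rw [hLps, hLpt] at hLle; linarith
      have hst' : s = t := le_antisymm hst hts
      have hγ : γ (p s) = γ (p t) := hconst _ hps _ hpt (by rw [hLps, hLpt, hst'])
      exact ⟨fun i => by rw [hγ], by rw [hγ, hst']; simp⟩
  refine ⟨fun s => γ (p s), ?_, ?_, ?_, ?_, ?_⟩
  · -- continuity via Lipschitz
    have hlip : LipschitzOnWith 1 (fun s => γ (p s)) (Icc 0 (L ℓ)) := by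
      rw [lipschitzOnWith_iff_dist_le_mul]
      intro s hs t ht
      rw [NNReal.coe_one, one_mul]
      rcases le_total t s with h | h
      · obtain ⟨_, hsum⟩ := key t ht s hs h
        refine (dist_pi_le_iff (by rw [Real.dist_eq]; positivity)).2 fun i => ?_
        rw [Real.dist_eq, Real.dist_eq]
        calc |γ (p s) i - γ (p t) i| ≤ ∑ j, |γ (p s) j - γ (p t) j| :=
              Finset.single_le_sum (f := fun j => |γ (p s) j - γ (p t) j|) (fun j _ => abs_nonneg _) (Finset.mem_univ i)
          _ = s - t := hsum
          _ ≤ |s - t| := le_abs_self _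
      · obtain ⟨_, hsum⟩ := key s hs t ht h
        refine (dist_pi_le_iff (by rw [Real.dist_eq]; positivity)).2 fun i => ?_
        rw [Real.dist_eq, Real.dist_eq]
        calc |γ (p s) i - γ (p t) i| = |γ (p t) i - γ (p s) i| := abs_sub_comm _ _
          _ ≤ ∑ j, |γ (p t) j - γ (p s) j| :=
              Finset.single_le_sum (f := fun j => |γ (p t) j - γ (p s) j|) (fun j _ => abs_nonneg _) (Finset.mem_univ i)
          _ = t - s := hsum
          _ = |s - t| := by rw [abs_sub_comm, abs_of_nonneg (by linarith)]
    exact hlip.continuousOn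
  · -- δ (L t) = γ t
    intro t ht
    have hLt : L t ∈ Icc (0:ℝ) (L ℓ) := ⟨hL0 ▸ hLmono h0mem ht ht.1, hLmono ht hℓmem ht.2⟩
    obtain ⟨hpm, hpe⟩ := hp (L t) hLt
    exact hconst _ hpm _ ht hpe
  · intro t ht i
    exact hcube _ (hp t ht).1 i
  · intro i s hs t ht hst
    exact (key s hs t ht hst).1 i
  · intro t ht
    have h0 : (0:ℝ) ∈ Icc (0:ℝ) (L ℓ) := ⟨le_refl 0, ht.1.trans ht.2⟩
    have := (key 0 h0 t ht ht.1).2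
    simpa using this
end

section
/- Let X be a Hausdorff topological space and γ : [0, ℓ] → X a continuous map that is 'regular' in the sense that it is not constant on any nondegenerate subinterval of [0, ℓ]. If φ₁, φ₂ : [0, ℓ'] → [0, ℓ] are two nondecreasing surjective maps with γ ∘ φ₁ = γ ∘ φ₂, then φ₁ = φ₂. -/
open Set Filter Topology

/-- A monotone self-map of `[0, ℓ]` that `γ`-commutes with `γ` (i.e. `γ ∘ ψ = γ`) must be the
identity, when `γ` is regular. -/
private lemma psi_eq_id {X : Type*} [TopologicalSpace X] [T2Space X] {ℓ : ℝ}
    {γ : ℝ → X} (hc : ContinuousOn γ (Icc 0 ℓ))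
    (hreg : ∀ a b : ℝ, 0 ≤ a → a < b → b ≤ ℓ → ¬ ∀ s ∈ Icc a b, γ s = γ a)
    {ψ : ℝ → ℝ} (hm : MonotoneOn ψ (Icc 0 ℓ)) (ht : MapsTo ψ (Icc 0 ℓ) (Icc 0 ℓ))
    (hγ : ∀ x ∈ Icc 0 ℓ, γ (ψ x) = γ x) :
    ∀ s ∈ Icc 0 ℓ, ψ s = s := by
  have hmem : ∀ n, ∀ a ∈ Icc 0 ℓ, ψ^[n] a ∈ Icc 0 ℓ := fun n a ha => ht.iterate n ha
  have hmono : ∀ n, ∀ a ∈ Icc 0 ℓ, ∀ b ∈ Icc 0 ℓ, a ≤ b → ψ^[n] a ≤ ψ^[n] b := by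
    intro n
    induction n with
    | zero => intro a _ b _ h; simpa using h
    | succ k ih =>
      intro a ha b hb hab
      rw [Function.iterate_succ_apply', Function.iterate_succ_apply']
      exact hm (hmem k a ha) (hmem k b hb) (ih a ha b hb hab)
  have hγn : ∀ n, ∀ a ∈ Icc 0 ℓ, γ (ψ^[n] a) = γ a := by
    intro n
    induction n with
    | zero => intro a _; rfl
    | succ k ih =>
      intro a ha
      rw [Function.iterate_succ_apply', hγ _ (hmem k a ha), ih a ha]
  intro s hs
  by_contra hne
  have hbs : ψ s ∈ Icc 0 ℓ := ht hs
  rcases lt_or_gt_of_ne hne with hlt | hgt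
  · -- case ψ s < s : iterates decrease to an infimum c, and γ is constant on [ψ s, s]
    set u : ℕ → ℝ := fun n => ψ^[n] s with hu
    have hu_anti : Antitone u := by
      refine antitone_nat_of_succ_le fun n => ?_
      have h := hmono n (ψ s) hbs s hs hlt.le
      rw [← Function.iterate_succ_apply] at h
      exact h
    have hbdd : BddBelow (Set.range u) := by
      refine ⟨0, ?_⟩
      rintro x ⟨n, rfl⟩
      exact (hmem n s hs).1
    set c : ℝ := ⨅ n, u n with hcdef
    have htend : Tendsto u atTop (𝓝 c) := tendsto_atTop_ciInf hu_anti hbdd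
    have hcmem : c ∈ Icc 0 ℓ := by
      constructor
      · exact le_ciInf fun n => (hmem n s hs).1
      · exact le_trans (ciInf_le hbdd 0) hs.2
    have key : ∀ r ∈ Icc (ψ s) s, γ r = γ c := by
      intro r hr
      have hrI : r ∈ Icc 0 ℓ := ⟨hbs.1.trans hr.1, hr.2.trans hs.2⟩
      have hlow : ∀ n, u (n + 1) ≤ ψ^[n] r := by
        intro n
        have h := hmono n (ψ s) hbs r hrI hr.1
        rw [← Function.iterate_succ_apply] at h
        exact h
      have hhigh : ∀ n, ψ^[n] r ≤ u n := fun n => hmono n r hrI s hs hr.2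
      have htend1 : Tendsto (fun n => u (n + 1)) atTop (𝓝 c) :=
        htend.comp (tendsto_add_atTop_nat 1)
      have hwt : Tendsto (fun n => ψ^[n] r) atTop (𝓝 c) :=
        tendsto_of_tendsto_of_tendsto_of_le_of_le htend1 htend hlow hhigh
      have h1 : Tendsto (fun n => γ (ψ^[n] r)) atTop (𝓝 (γ c)) :=
        (hc c hcmem).tendsto.comp
          (tendsto_nhdsWithin_of_tendsto_nhds_of_eventually_within _ hwt
            (Eventually.of_forall fun n => hmem n r hrI))
      have h2 : (fun n => γ (ψ^[n] r)) = fun _ => γ r := funext fun n => hγn n r hrI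
      rw [h2] at h1
      exact tendsto_nhds_unique tendsto_const_nhds h1
    refine hreg (ψ s) s hbs.1 hlt hs.2 fun r hr => ?_
    rw [key r hr, key (ψ s) ⟨le_refl _, hlt.le⟩]
  · -- case s < ψ s : iterates increase to a supremum c, and γ is constant on [s, ψ s]
    set u : ℕ → ℝ := fun n => ψ^[n] s with hu
    have hu_mono : Monotone u := by
      refine monotone_nat_of_le_succ fun n => ?_
      have h := hmono n s hs (ψ s) hbs hgt.le
      rw [← Function.iterate_succ_apply] at h
      exact h
    have hbdd : BddAbove (Set.range u) := by
      refine ⟨ℓ, ?_⟩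
      rintro x ⟨n, rfl⟩
      exact (hmem n s hs).2
    set c : ℝ := ⨆ n, u n with hcdef
    have htend : Tendsto u atTop (𝓝 c) := tendsto_atTop_ciSup hu_mono hbdd
    have hcmem : c ∈ Icc 0 ℓ := by
      constructor
      · exact le_trans hs.1 (le_ciSup hbdd 0)
      · exact ciSup_le fun n => (hmem n s hs).2
    have key : ∀ r ∈ Icc s (ψ s), γ r = γ c := by
      intro r hr
      have hrI : r ∈ Icc 0 ℓ := ⟨hs.1.trans hr.1, hr.2.trans hbs.2⟩
      have hlow : ∀ n, u n ≤ ψ^[n] r := fun n => hmono n s hs r hrI hr.1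
      have hhigh : ∀ n, ψ^[n] r ≤ u (n + 1) := by
        intro n
        have h := hmono n r hrI (ψ s) hbs hr.2
        rw [← Function.iterate_succ_apply] at h
        exact h
      have htend1 : Tendsto (fun n => u (n + 1)) atTop (𝓝 c) :=
        htend.comp (tendsto_add_atTop_nat 1)
      have hwt : Tendsto (fun n => ψ^[n] r) atTop (𝓝 c) :=
        tendsto_of_tendsto_of_tendsto_of_le_of_le htend htend1 hlow hhigh
      have h1 : Tendsto (fun n => γ (ψ^[n] r)) atTop (𝓝 (γ c)) :=
        (hc c hcmem).tendsto.comp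
          (tendsto_nhdsWithin_of_tendsto_nhds_of_eventually_within _ hwt
            (Eventually.of_forall fun n => hmem n r hrI))
      have h2 : (fun n => γ (ψ^[n] r)) = fun _ => γ r := funext fun n => hγn n r hrI
      rw [h2] at h1
      exact tendsto_nhds_unique tendsto_const_nhds h1
    refine hreg s (ψ s) hs.1 hgt hbs.2 fun r hr => ?_
    rw [key r hr, key s ⟨le_refl _, hgt.le⟩]

/-- Cancellation of reparametrizations along a regular path: if `X` is Hausdorff,
`γ : [0, ℓ] → X` is continuous and not constant on any nondegenerate subinterval, and
`φ₁, φ₂ : [0, ℓ'] → [0, ℓ]` are nondecreasing surjections with `γ ∘ φ₁ = γ ∘ φ₂`, then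
`φ₁ = φ₂`. -/
theorem regular_path_cancel {X : Type*} [TopologicalSpace X] [T2Space X]
    (ℓ ℓ' : ℝ) (hℓ : 0 < ℓ) (hℓ' : 0 < ℓ')
    (γ : ℝ → X) (hc : ContinuousOn γ (Icc 0 ℓ))
    (hreg : ∀ a b : ℝ, 0 ≤ a → a < b → b ≤ ℓ → ¬ ∀ s ∈ Icc a b, γ s = γ a)
    (φ₁ φ₂ : ℝ → ℝ)
    (h1m : MonotoneOn φ₁ (Icc 0 ℓ')) (h1s : SurjOn φ₁ (Icc 0 ℓ') (Icc 0 ℓ))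
    (h1t : MapsTo φ₁ (Icc 0 ℓ') (Icc 0 ℓ))
    (h2m : MonotoneOn φ₂ (Icc 0 ℓ')) (h2s : SurjOn φ₂ (Icc 0 ℓ') (Icc 0 ℓ))
    (h2t : MapsTo φ₂ (Icc 0 ℓ') (Icc 0 ℓ))
    (heq : EqOn (γ ∘ φ₁) (γ ∘ φ₂) (Icc 0 ℓ')) :
    EqOn φ₁ φ₂ (Icc 0 ℓ') := by
  classical
  -- Well-definedness: if φ₁ agrees at two points, so does φ₂.
  have W0 : ∀ u ∈ Icc 0 ℓ', ∀ u' ∈ Icc 0 ℓ', u ≤ u' → φ₁ u = φ₁ u' → φ₂ u = φ₂ u' := by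
    intro u hu u' hu' huu' h11
    by_contra hne
    have hlt : φ₂ u < φ₂ u' := lt_of_le_of_ne (h2m hu hu' huu') hne
    refine hreg (φ₂ u) (φ₂ u') (h2t hu).1 hlt (h2t hu').2 fun s hsi => ?_
    rcases eq_or_lt_of_le hsi.1 with h | h
    · rw [← h]
    · have hsI : s ∈ Icc 0 ℓ := ⟨le_trans (h2t hu).1 hsi.1, le_trans hsi.2 (h2t hu').2⟩
      obtain ⟨v, hv, hvs⟩ := h2s hsI
      rcases le_or_gt v u' with hvu' | hvu'
      · have hvu : u ≤ v := by
          by_contra hc'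
          push_neg at hc'
          have := h2m hv hu hc'.le
          rw [hvs] at this
          exact absurd this (not_le_of_gt h)
        have h1v : φ₁ v = φ₁ u := by
          refine le_antisymm ?_ (h1m hu hv hvu)
          rw [h11]
          exact h1m hv hu' hvu'
        calc γ s = γ (φ₂ v) := by rw [hvs]
          _ = γ (φ₁ v) := (heq hv).symm
          _ = γ (φ₁ u) := by rw [h1v]
          _ = γ (φ₂ u) := heq hu
      · have hse : s = φ₂ u' := le_antisymm hsi.2 (by rw [← hvs]; exact h2m hu' hv hvu'.le)
        calc γ s = γ (φ₁ u') := by rw [hse]; exact (heq hu').symm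
          _ = γ (φ₁ u) := by rw [h11]
          _ = γ (φ₂ u) := heq hu
  have W : ∀ u ∈ Icc 0 ℓ', ∀ u' ∈ Icc 0 ℓ', φ₁ u = φ₁ u' → φ₂ u = φ₂ u' := by
    intro u hu u' hu' h11
    rcases le_total u u' with h | h
    · exact W0 u hu u' hu' h h11
    · exact (W0 u' hu' u hu h h11.symm).symm
  -- the pushed-forward reparametrization ψ = φ₂ ∘ φ₁⁻¹
  set ψ : ℝ → ℝ := fun s => if h : s ∈ Icc 0 ℓ then φ₂ (h1s h).choose else s with hψ
  have hch : ∀ {s : ℝ} (h : s ∈ Icc 0 ℓ),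
      (h1s h).choose ∈ Icc 0 ℓ' ∧ φ₁ (h1s h).choose = s := fun h => (h1s h).choose_spec
  have hψval : ∀ {s : ℝ} (h : s ∈ Icc 0 ℓ), ψ s = φ₂ (h1s h).choose := by
    intro s h
    exact dif_pos h
  have hψt : MapsTo ψ (Icc 0 ℓ) (Icc 0 ℓ) := by
    intro s h
    rw [hψval h]
    exact h2t (hch h).1
  have hψm : MonotoneOn ψ (Icc 0 ℓ) := by
    intro s hsm s' hsm' hss'
    rcases eq_or_lt_of_le hss' with rfl | hss'
    · exact le_refl _
    · rw [hψval hsm, hψval hsm']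
      have h1 := (hch hsm).2
      have h2 := (hch hsm').2
      have : (h1s hsm).choose ≤ (h1s hsm').choose := by
        by_contra hcon
        push_neg at hcon
        have := h1m (hch hsm').1 (hch hsm).1 hcon.le
        rw [h1, h2] at this
        exact absurd this (not_le_of_gt hss')
      exact h2m (hch hsm).1 (hch hsm').1 this
  have hψγ : ∀ x ∈ Icc 0 ℓ, γ (ψ x) = γ x := by
    intro x hx
    have h' := heq (hch hx).1
    simp only [Function.comp_apply] at h'
    rw [hψval hx, ← h', (hch hx).2]
  have hid := psi_eq_id hc hreg hψm hψt hψγ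
  intro t htm
  have h1 : φ₁ t ∈ Icc 0 ℓ := h1t htm
  have := hid (φ₁ t) h1
  rw [hψval h1] at this
  rw [← this]
  exact W _ (hch h1).1 t htm (hch h1).2
end

section
/- Let γ : [0, ℓ] → [0,1]^n be a d-path with total L₁-arc length m = L_γ(ℓ) > 0. Then the map Ψ(γ) = (L_γ, N(γ)), sending γ to the pair consisting of its arc-length reparametrization L_γ ∈ M(ℓ, m) (a nondecreasing surjection [0, ℓ] → [0, m]) and its naturalization N(γ), is a two-sided inverse to the composition map Φ(φ, δ) = δ ∘ φ; in particular, the map (φ, δ) ↦ δ ∘ φ from M(ℓ, m) × {natural d-paths of length m} to {d-paths of length parameter ℓ and arc length m} is a bijection. -/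
open Set

/-- `d₁(x, y) = Σᵢ |xᵢ − yᵢ|`. -/
noncomputable def dOne {n : ℕ} (x y : Fin n → ℝ) : ℝ := ∑ i, |x i - y i|

/-- A d-path of length parameter `ℓ` in the `n`-cube. -/
def IsDPath (n : ℕ) (ℓ : ℝ) (γ : ℝ → Fin n → ℝ) : Prop :=
  ContinuousOn γ (Icc 0 ℓ) ∧ (∀ i, MonotoneOn (fun t => γ t i) (Icc 0 ℓ)) ∧
    ∀ t ∈ Icc (0:ℝ) ℓ, ∀ i, γ t i ∈ Icc (0:ℝ) 1

/-- An element of `M(ℓ, m)`: a nondecreasing surjection `[0, ℓ] → [0, m]`. -/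
def IsMSur (ℓ m : ℝ) (φ : ℝ → ℝ) : Prop :=
  MonotoneOn φ (Icc 0 ℓ) ∧ SurjOn φ (Icc 0 ℓ) (Icc 0 m) ∧ MapsTo φ (Icc 0 ℓ) (Icc 0 m)

/-- A natural d-path of length `m`: its arc-length function is the identity. -/
def IsNatural (n : ℕ) (m : ℝ) (δ : ℝ → Fin n → ℝ) : Prop :=
  IsDPath n m δ ∧ ∀ t ∈ Icc (0:ℝ) m, dOne (δ 0) (δ t) = t

lemma dOne_eq_sum_sub {n : ℕ} {x y : Fin n → ℝ} (h : ∀ i, x i ≤ y i) :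
    dOne x y = ∑ i, (y i - x i) := by
  unfold dOne
  refine Finset.sum_congr rfl fun i _ => ?_
  rw [abs_sub_comm, abs_of_nonneg (by linarith [h i])]

/-- For a monotone-surjection `φ ∈ M(ℓ, m)` we have `φ 0 = 0` and `φ ℓ = m`. -/
lemma msur_endpoints {ℓ m : ℝ} {φ : ℝ → ℝ} (hℓ : 0 ≤ ℓ) (hm : 0 ≤ m)
    (hφ : IsMSur ℓ m φ) : φ 0 = 0 ∧ φ ℓ = m := by
  obtain ⟨hmono, hsurj, hmaps⟩ := hφ
  obtain ⟨a, ha, hfa⟩ := hsurj (show (0:ℝ) ∈ Icc 0 m from ⟨le_refl _, hm⟩)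
  obtain ⟨b, hb, hfb⟩ := hsurj (show m ∈ Icc 0 m from ⟨hm, le_refl _⟩)
  have h0 : (0:ℝ) ∈ Icc 0 ℓ := ⟨le_refl _, hℓ⟩
  have hL : ℓ ∈ Icc (0:ℝ) ℓ := ⟨hℓ, le_refl _⟩
  constructor
  · have h1 : φ 0 ≤ φ a := hmono h0 ha ha.1
    have h2 := (hmaps h0).1
    linarith [hfa ▸ h1]
  · have h1 : φ b ≤ φ ℓ := hmono hb hL hb.2
    have h2 := (hmaps hL).2
    linarith [hfb ▸ h1]

/-- For a natural path, `∑ᵢ (δ t i − δ s i) = t − s` for `s ≤ t` in `[0, m]`. -/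
lemma natural_sum {n : ℕ} {m : ℝ} {δ : ℝ → Fin n → ℝ} (hδ : IsNatural n m δ)
    {s t : ℝ} (hs : s ∈ Icc (0:ℝ) m) (ht : t ∈ Icc (0:ℝ) m) (hst : s ≤ t) :
    ∑ i, (δ t i - δ s i) = t - s := by
  have h0 : (0:ℝ) ∈ Icc (0:ℝ) m := ⟨le_refl _, le_trans hs.1 hs.2⟩
  have hmono := hδ.1.2.1
  have hT : ∑ i, (δ t i - δ 0 i) = t := by
    rw [← dOne_eq_sum_sub (fun i => hmono i h0 ht ht.1)]
    exact hδ.2 t ht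
  have hS : ∑ i, (δ s i - δ 0 i) = s := by
    rw [← dOne_eq_sum_sub (fun i => hmono i h0 hs hs.1)]
    exact hδ.2 s hs
  have : ∑ i, (δ t i - δ s i) = (∑ i, (δ t i - δ 0 i)) - ∑ i, (δ s i - δ 0 i) := by
    rw [← Finset.sum_sub_distrib]
    exact Finset.sum_congr rfl fun i _ => by ring
  rw [this, hT, hS]

/-- The map `Φ(φ, δ) = δ ∘ φ`, from pairs of a nondecreasing surjection `φ ∈ M(ℓ, m)` and
a natural d-path `δ` of length `m`, to d-paths of length parameter `ℓ` and arc length `m`,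
is a bijection (with inverse `γ ↦ (L_γ, N(γ))`): every composite is such a d-path, and
every such d-path factors uniquely as `δ ∘ φ`. -/
theorem naturalization_bijection (n : ℕ) (hn : 1 ≤ n) (ℓ m : ℝ) (hℓ : 0 < ℓ) (hm : 0 < m) :
    (∀ (φ : ℝ → ℝ) (δ : ℝ → Fin n → ℝ), IsMSur ℓ m φ → IsNatural n m δ →
        IsDPath n ℓ (fun t => δ (φ t)) ∧ dOne (δ (φ 0)) (δ (φ ℓ)) = m) ∧
    (∀ γ : ℝ → Fin n → ℝ, IsDPath n ℓ γ → dOne (γ 0) (γ ℓ) = m →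
        ∃ (φ : ℝ → ℝ) (δ : ℝ → Fin n → ℝ), IsMSur ℓ m φ ∧ IsNatural n m δ ∧
          Set.EqOn (fun t => δ (φ t)) γ (Icc 0 ℓ) ∧
          ∀ (φ' : ℝ → ℝ) (δ' : ℝ → Fin n → ℝ), IsMSur ℓ m φ' → IsNatural n m δ' →
            Set.EqOn (fun t => δ' (φ' t)) γ (Icc 0 ℓ) →
              Set.EqOn φ φ' (Icc 0 ℓ) ∧ Set.EqOn δ δ' (Icc 0 m)) := by
  constructor
  · -- Part 1 : composites are d-paths of arc length m
    rintro φ δ hφ hδ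
    obtain ⟨hφ0, hφℓ⟩ := msur_endpoints hℓ.le hm.le hφ
    obtain ⟨hφmono, hφsurj, hφmaps⟩ := hφ
    -- extend φ to a monotone surjection ψ : ℝ → ℝ to get continuity of φ
    set ψ : ℝ → ℝ := fun t => φ (min (max t 0) ℓ) + min t 0 + max (t - ℓ) 0 with hψdef
    have hclamp : ∀ t, min (max t 0) ℓ ∈ Icc (0:ℝ) ℓ := fun t =>
      ⟨le_min (le_max_right _ _) hℓ.le, min_le_right _ _⟩
    have hψmono : Monotone ψ := by
      intro a b hab
      have h1 : φ (min (max a 0) ℓ) ≤ φ (min (max b 0) ℓ) :=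
        hφmono (hclamp a) (hclamp b)
          (min_le_min (max_le_max hab (le_refl _)) (le_refl _))
      have h2 : min a 0 ≤ min b 0 := min_le_min hab (le_refl _)
      have h3 : max (a - ℓ) 0 ≤ max (b - ℓ) 0 := max_le_max (by linarith) (le_refl _)
      simpa [hψdef] using add_le_add (add_le_add h1 h2) h3
    have hψeq : EqOn ψ φ (Icc 0 ℓ) := by
      intro t ht
      have h1 : min (max t 0) ℓ = t := by
        rw [max_eq_left ht.1, min_eq_left ht.2]
      have h2 : min t 0 = 0 := min_eq_right ht.1
      have h3 : max (t - ℓ) 0 = 0 := max_eq_right (by linarith [ht.2])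
      simp [hψdef, h1, h2, h3]
    have hψsurj : Function.Surjective ψ := by
      intro y
      rcases le_total y 0 with hy | hy
      · refine ⟨y, ?_⟩
        have h1 : max y 0 = 0 := max_eq_right hy
        have h2 : min y 0 = y := min_eq_left hy
        have h3 : max (y - ℓ) 0 = 0 := max_eq_right (by linarith)
        simp [hψdef, h1, h2, h3, min_eq_left hℓ.le, hφ0]
      · rcases le_total y m with hy2 | hy2
        · obtain ⟨t, ht, hft⟩ := hφsurj (show y ∈ Icc (0:ℝ) m from ⟨hy, hy2⟩)
          exact ⟨t, by rw [hψeq ht]; exact hft⟩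
        · refine ⟨ℓ + (y - m), ?_⟩
          have hge : (0:ℝ) ≤ ℓ + (y - m) := by linarith
          have h1 : max (ℓ + (y - m)) 0 = ℓ + (y - m) := max_eq_left hge
          have h2 : min (ℓ + (y - m)) ℓ = ℓ := min_eq_right (by linarith)
          have h3 : min (ℓ + (y - m)) 0 = 0 := min_eq_right hge
          have h4 : max (ℓ + (y - m) - ℓ) 0 = y - m := by
            rw [max_eq_left (by linarith)]; ring
          simp only [hψdef, h1, h2, h3, h4, hφℓ]; ring
    have hφcont : ContinuousOn φ (Icc 0 ℓ) :=
      ((hψmono.continuous_of_surjective hψsurj).continuousOn).congr hψeq.symm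
    refine ⟨⟨?_, ?_, ?_⟩, ?_⟩
    · exact hδ.1.1.comp hφcont hφmaps
    · intro i a ha b hb hab
      exact hδ.1.2.1 i (hφmaps ha) (hφmaps hb) (hφmono ha hb hab)
    · intro t ht i
      exact hδ.1.2.2 (φ t) (hφmaps ht) i
    · rw [hφ0, hφℓ]
      exact hδ.2 m ⟨hm.le, le_refl _⟩
  · -- Part 2 : existence and uniqueness of factorization
    rintro γ hγ hγm
    obtain ⟨hγcont, hγmono, hγmaps⟩ := hγ
    set φ : ℝ → ℝ := fun t => dOne (γ 0) (γ t) with hφdef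
    have h0L : (0:ℝ) ∈ Icc (0:ℝ) ℓ := ⟨le_refl _, hℓ.le⟩
    have hLL : ℓ ∈ Icc (0:ℝ) ℓ := ⟨hℓ.le, le_refl _⟩
    have hφeq : ∀ t ∈ Icc (0:ℝ) ℓ, φ t = ∑ i, (γ t i - γ 0 i) := fun t ht =>
      dOne_eq_sum_sub (fun i => hγmono i h0L ht ht.1)
    have hφ0 : φ 0 = 0 := by
      simp [hφdef, dOne]
    have hφℓ : φ ℓ = m := hγm
    -- difference formula
    have hφsub : ∀ s ∈ Icc (0:ℝ) ℓ, ∀ t ∈ Icc (0:ℝ) ℓ, s ≤ t →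
        ∑ i, (γ t i - γ s i) = φ t - φ s := by
      intro s hs t ht hst
      rw [hφeq s hs, hφeq t ht, ← Finset.sum_sub_distrib]
      exact Finset.sum_congr rfl fun i _ => by ring
    have hφmono : MonotoneOn φ (Icc 0 ℓ) := by
      intro s hs t ht hst
      have h := hφsub s hs t ht hst
      have hnn : (0:ℝ) ≤ ∑ i, (γ t i - γ s i) :=
        Finset.sum_nonneg fun i _ => by linarith [hγmono i hs ht hst]
      linarith
    have hφcont : ContinuousOn φ (Icc 0 ℓ) := by
      apply continuousOn_finset_sum
      intro i _
      have : ContinuousOn (fun t => γ t i) (Icc 0 ℓ) :=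
        (continuous_apply i).comp_continuousOn hγcont
      exact (continuousOn_const.sub this).abs
    have hφmaps : MapsTo φ (Icc 0 ℓ) (Icc 0 m) := by
      intro t ht
      refine ⟨by rw [← hφ0]; exact hφmono h0L ht ht.1,
        by rw [← hφℓ]; exact hφmono ht hLL ht.2⟩
    have hφsurj : SurjOn φ (Icc 0 ℓ) (Icc 0 m) := by
      have := intermediate_value_Icc hℓ.le hφcont
      rw [hφ0, hφℓ] at this
      exact this
    -- same φ-value implies same γ-value
    have hsame : ∀ s ∈ Icc (0:ℝ) ℓ, ∀ t ∈ Icc (0:ℝ) ℓ, φ s = φ t → γ s = γ t := by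
      have key : ∀ s ∈ Icc (0:ℝ) ℓ, ∀ t ∈ Icc (0:ℝ) ℓ, s ≤ t → φ s = φ t → γ s = γ t := by
        intro s hs t ht hst hphi
        funext i
        have hsum := hφsub s hs t ht hst
        rw [← hphi, sub_self] at hsum
        have hle : γ t i - γ s i ≤ ∑ j, (γ t j - γ s j) :=
          Finset.single_le_sum (f := fun j => γ t j - γ s j)
            (fun j _ => by have h' := hγmono j hs ht hst; dsimp only at h' ⊢; linarith)
            (Finset.mem_univ i)
        have hge : γ s i ≤ γ t i := hγmono i hs ht hst
        linarith
      intro s hs t ht hphi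
      rcases le_total s t with h | h
      · exact key s hs t ht h hphi
      · exact (key t ht s hs h hphi.symm).symm
    -- the choice of preimages and the natural path
    set T : ℝ → ℝ := fun s => Function.invFunOn φ (Icc 0 ℓ) s with hTdef
    have hT : ∀ s ∈ Icc (0:ℝ) m, T s ∈ Icc (0:ℝ) ℓ ∧ φ (T s) = s := by
      intro s hs
      obtain ⟨t, ht, hft⟩ := hφsurj hs
      exact ⟨Function.invFunOn_mem ⟨t, ht, hft⟩, Function.invFunOn_eq ⟨t, ht, hft⟩⟩
    set δ : ℝ → Fin n → ℝ := fun s => γ (T s) with hδdef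
    have h0m : (0:ℝ) ∈ Icc (0:ℝ) m := ⟨le_refl _, hm.le⟩
    have hδ0 : δ 0 = γ 0 := by
      refine hsame (T 0) (hT 0 h0m).1 0 h0L ?_
      rw [(hT 0 h0m).2, hφ0]
    -- key estimates for δ
    have hδle : ∀ s ∈ Icc (0:ℝ) m, ∀ s' ∈ Icc (0:ℝ) m, s ≤ s' →
        ∀ i, δ s i ≤ δ s' i ∧ δ s' i - δ s i ≤ s' - s := by
      intro s hs s' hs' hss i
      have h1 := hT s hs
      have h2 := hT s' hs'
      rcases le_total (T s) (T s') with h | h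
      · have hmono := hγmono i h1.1 h2.1 h
        have hsum := hφsub (T s) h1.1 (T s') h2.1 h
        rw [h1.2, h2.2] at hsum
        have hle : γ (T s') i - γ (T s) i ≤ ∑ j, (γ (T s') j - γ (T s) j) :=
          Finset.single_le_sum (f := fun j => γ (T s') j - γ (T s) j)
            (fun j _ => by have h' := hγmono j h1.1 h2.1 h; dsimp only at h' ⊢; linarith)
            (Finset.mem_univ i)
        exact ⟨hmono, by linarith⟩
      · have : φ (T s') ≤ φ (T s) := hφmono h2.1 h1.1 h
        rw [h1.2, h2.2] at this
        have hseq : s = s' := le_antisymm hss this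
        have : γ (T s) = γ (T s') := by
          refine hsame (T s) h1.1 (T s') h2.1 ?_
          rw [h1.2, h2.2, hseq]
        simp [hδdef, this, hseq]
    have hδnat : ∀ s ∈ Icc (0:ℝ) m, dOne (δ 0) (δ s) = s := by
      intro s hs
      rw [hδ0]
      exact (hT s hs).2
    have hδcont : ContinuousOn δ (Icc 0 m) := by
      rw [continuousOn_pi]
      intro i
      have hlip : LipschitzOnWith 1 (fun s => δ s i) (Icc 0 m) := by
        apply LipschitzOnWith.of_dist_le_mul
        intro s hs s' hs'
        rw [Real.dist_eq, Real.dist_eq]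
        rcases le_total s' s with h | h
        · obtain ⟨hm1, hm2⟩ := hδle s' hs' s hs h i
          rw [abs_of_nonneg (by linarith), abs_of_nonneg (by linarith)]
          push_cast; linarith
        · obtain ⟨hm1, hm2⟩ := hδle s hs s' hs' h i
          rw [abs_of_nonpos (by linarith), abs_of_nonpos (by linarith)]
          push_cast; linarith
      exact hlip.continuousOn
    have hδnatural : IsNatural n m δ := by
      refine ⟨⟨hδcont, ?_, ?_⟩, hδnat⟩
      · intro i s hs s' hs' hss
        exact (hδle s hs s' hs' hss i).1
      · intro s hs i
        exact hγmaps (T s) (hT s hs).1 i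
    have hfact : EqOn (fun t => δ (φ t)) γ (Icc 0 ℓ) := by
      intro t ht
      show γ (T (φ t)) = γ t
      exact hsame (T (φ t)) (hT (φ t) (hφmaps ht)).1 t ht (hT (φ t) (hφmaps ht)).2
    refine ⟨φ, δ, ⟨hφmono, hφsurj, hφmaps⟩, hδnatural, hfact, ?_⟩
    -- uniqueness
    intro φ' δ' hφ' hδ' hfact'
    obtain ⟨hφ'0, hφ'ℓ⟩ := msur_endpoints hℓ.le hm.le hφ'
    have hφφ' : EqOn φ φ' (Icc 0 ℓ) := by
      intro t ht
      have h1 : γ t = δ' (φ' t) := (hfact' ht).symm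
      have h2 : γ 0 = δ' (φ' 0) := (hfact' h0L).symm
      rw [hφ'0] at h2
      show dOne (γ 0) (γ t) = φ' t
      rw [h1, h2]
      exact hδ'.2 (φ' t) (hφ'.2.2 ht)
    refine ⟨hφφ', ?_⟩
    intro s hs
    obtain ⟨t, ht, hft⟩ := hφ'.2.1 hs
    have h1 : δ' s = γ t := by rw [← hft]; exact hfact' ht
    have h2 : δ s = γ t := by
      rw [← hft, ← hφφ' ht]
      exact hfact ht
    rw [h1, h2]
end

section
/- Let γ : [0, ℓ] → [0,1]^n be a d-path. Then γ is 'natural after reparametrization' uniquely: if δ₁ : [0, m] → [0,1]^n and δ₂ : [0, m] → [0,1]^n are natural d-paths and φ₁, φ₂ ∈ M(ℓ, m) are nondecreasing surjections with δ₁ ∘ φ₁ = δ₂ ∘ φ₂ = γ, then δ₁ = δ₂ and φ₁ = φ₂. -/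
open Set

lemma sum_eq_of_natural (n : ℕ) (m : ℝ) (δ : ℝ → Fin n → ℝ)
    (hmono : ∀ i, MonotoneOn (fun t => δ t i) (Icc 0 m))
    (hnat : ∀ t ∈ Icc (0:ℝ) m, ∑ i, |δ t i - δ 0 i| = t) :
    ∀ t ∈ Icc (0:ℝ) m, ∑ i, δ t i = (∑ i, δ 0 i) + t := by
  intro t ht
  have h0 : (0:ℝ) ∈ Icc (0:ℝ) m := ⟨le_refl _, le_trans ht.1 ht.2⟩
  have := hnat t ht
  have habs : ∀ i, |δ t i - δ 0 i| = δ t i - δ 0 i := fun i =>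
    abs_of_nonneg (sub_nonneg.2 (hmono i h0 ht ht.1))
  rw [Finset.sum_congr rfl (fun i _ => habs i), Finset.sum_sub_distrib] at this
  linarith

/-- Uniqueness of the natural reparametrization: if `δ₁, δ₂ : [0, m] → [0,1]^n` are
natural d-paths and `φ₁, φ₂ ∈ M(ℓ, m)` are nondecreasing surjections with
`δ₁ ∘ φ₁ = δ₂ ∘ φ₂ = γ` on `[0, ℓ]`, then `δ₁ = δ₂` and `φ₁ = φ₂`. -/
theorem naturalization_unique (n : ℕ) (hn : 1 ≤ n) (ℓ m : ℝ) (hℓ : 0 < ℓ) (hm : 0 < m)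
    (δ₁ δ₂ : ℝ → Fin n → ℝ)
    (hc1 : ContinuousOn δ₁ (Icc 0 m))
    (hm1 : ∀ i, MonotoneOn (fun t => δ₁ t i) (Icc 0 m))
    (hq1 : ∀ t ∈ Icc (0:ℝ) m, ∀ i, δ₁ t i ∈ Icc (0:ℝ) 1)
    (hnat1 : ∀ t ∈ Icc (0:ℝ) m, ∑ i, |δ₁ t i - δ₁ 0 i| = t)
    (hc2 : ContinuousOn δ₂ (Icc 0 m))
    (hm2 : ∀ i, MonotoneOn (fun t => δ₂ t i) (Icc 0 m))
    (hq2 : ∀ t ∈ Icc (0:ℝ) m, ∀ i, δ₂ t i ∈ Icc (0:ℝ) 1)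
    (hnat2 : ∀ t ∈ Icc (0:ℝ) m, ∑ i, |δ₂ t i - δ₂ 0 i| = t)
    (φ₁ φ₂ : ℝ → ℝ)
    (h1m : MonotoneOn φ₁ (Icc 0 ℓ)) (h1s : SurjOn φ₁ (Icc 0 ℓ) (Icc 0 m))
    (h1t : MapsTo φ₁ (Icc 0 ℓ) (Icc 0 m))
    (h2m : MonotoneOn φ₂ (Icc 0 ℓ)) (h2s : SurjOn φ₂ (Icc 0 ℓ) (Icc 0 m))
    (h2t : MapsTo φ₂ (Icc 0 ℓ) (Icc 0 m))
    (heq : EqOn (fun t => δ₁ (φ₁ t)) (fun t => δ₂ (φ₂ t)) (Icc 0 ℓ)) :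
    EqOn δ₁ δ₂ (Icc 0 m) ∧ EqOn φ₁ φ₂ (Icc 0 ℓ) := by
  have hS1 := sum_eq_of_natural n m δ₁ hm1 hnat1
  have hS2 := sum_eq_of_natural n m δ₂ hm2 hnat2
  -- φ₁ t - φ₂ t is constant
  have hconst : ∀ t ∈ Icc (0:ℝ) ℓ,
      φ₁ t - φ₂ t = (∑ i, δ₂ 0 i) - (∑ i, δ₁ 0 i) := by
    intro t ht
    have h1 := hS1 (φ₁ t) (h1t ht)
    have h2 := hS2 (φ₂ t) (h2t ht)
    have hsum : ∑ i, δ₁ (φ₁ t) i = ∑ i, δ₂ (φ₂ t) i := by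
      have := heq ht; simp only at this; rw [this]
    linarith
  -- c = 0 via surjectivity
  obtain ⟨t₁, ht₁, hφ₁⟩ := h1s (show m ∈ Icc (0:ℝ) m from ⟨hm.le, le_refl _⟩)
  obtain ⟨t₂, ht₂, hφ₂⟩ := h2s (show m ∈ Icc (0:ℝ) m from ⟨hm.le, le_refl _⟩)
  have hc1' := hconst t₁ ht₁
  have hc2' := hconst t₂ ht₂
  have hub1 := (h2t ht₁).2
  have hub2 := (h1t ht₂).2
  have hc0 : (∑ i, δ₂ 0 i) - (∑ i, δ₁ 0 i) = 0 := by
    rw [hφ₁] at hc1'; rw [hφ₂] at hc2'; linarith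
  have hφeq : EqOn φ₁ φ₂ (Icc 0 ℓ) := by
    intro t ht
    have := hconst t ht
    rw [hc0] at this
    linarith
  refine ⟨?_, hφeq⟩
  intro s hs
  obtain ⟨t, ht, hφt⟩ := h1s hs
  have h := heq ht
  simp only at h
  rw [← hφt, h, hφeq ht]
end
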